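/- Let X be a real or complex Banach space with k-polynomial numerical index n^(k)(X) = 1, for some integer k ≥ 1. Then for every point x ∈ ρ̃𝒫(ᵏX) (i.e., every strong norm-attainment point of a k-homogeneous scalar polynomial) and every extreme point x* of B_{X*}, one has |x*(x)| = 1. -/

import Mathlib

open Metric Filter Topology Set

/-- The sup norm of a function over the closed unit ball. -/
noncomputable def supNorm {X Y : Type*} [NormedAddCommGroup X] [NormedAddCommGroup Y]
    (f : X → Y) : ℝ :=
  sSup ((fun x => ‖f x‖) '' Metric.closedBall (0 : X) 1)

/-- `f` strongly attains its (sup) norm at `x₀`: every maximizing sequence in the closed unit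
ball has a subsequence converging to a unimodular multiple of `x₀`. -/
def StronglyAttains (𝕂 : Type*) [RCLike 𝕂] {X Y : Type*} [NormedAddCommGroup X]
    [NormedSpace 𝕂 X] [NormedAddCommGroup Y] (f : X → Y) (x₀ : X) : Prop :=
  ∀ xs : ℕ → X, (∀ n, xs n ∈ Metric.closedBall (0 : X) 1) →
    Tendsto (fun n => ‖f (xs n)‖) atTop (nhds (supNorm f)) →
    ∃ (α : 𝕂) (φ : ℕ → ℕ), StrictMono φ ∧ ‖α‖ = 1 ∧
      Tendsto (fun n => xs (φ n)) atTop (nhds (α • x₀))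

/-- The `k`-homogeneous polynomial associated to a continuous `k`-multilinear map. -/
noncomputable def polyEval {𝕂 : Type*} [RCLike 𝕂] {X Y : Type*} [NormedAddCommGroup X]
    [NormedSpace 𝕂 X] [NormedAddCommGroup Y] [NormedSpace 𝕂 Y] {k : ℕ}
    (L : ContinuousMultilinearMap 𝕂 (fun _ : Fin k => X) Y) : X → Y :=
  fun x => L (fun _ => x)

/-- The set `ρ̃𝒫(ᵏX)` of points of the closed unit ball at which some nonzero bounded
`k`-homogeneous scalar polynomial strongly attains its norm. -/
def polyAttainPts (𝕂 : Type*) [RCLike 𝕂] (X : Type*) [NormedAddCommGroup X]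
    [NormedSpace 𝕂 X] (k : ℕ) : Set X :=
  {x₀ | x₀ ∈ Metric.closedBall (0 : X) 1 ∧
    ∃ L : ContinuousMultilinearMap 𝕂 (fun _ : Fin k => X) 𝕂,
      polyEval L ≠ 0 ∧ StronglyAttains 𝕂 (polyEval L) x₀}

/-- Numerical radius `v(f) = sup { |x*(f x)| : (x, x*) ∈ Π(X) }`. -/
noncomputable def numRadius (𝕂 : Type*) [RCLike 𝕂] {X : Type*} [NormedAddCommGroup X]
    [NormedSpace 𝕂 X] (f : X → X) : ℝ :=
  sSup {r | ∃ (x : X) (x' : X →L[𝕂] 𝕂), ‖x‖ = 1 ∧ ‖x'‖ = 1 ∧ x' x = 1 ∧ r = ‖x' (f x)‖}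

/-- The `k`-polynomial numerical index `n^(k)(X)`. -/
noncomputable def polyNumIndex (𝕂 : Type*) [RCLike 𝕂] (X : Type*) [NormedAddCommGroup X]
    [NormedSpace 𝕂 X] (k : ℕ) : ℝ :=
  sInf {r | ∃ L : ContinuousMultilinearMap 𝕂 (fun _ : Fin k => X) X,
    supNorm (polyEval L) = 1 ∧ r = numRadius 𝕂 (polyEval L)}

/-- The numerical index `n(X)` of a Banach space. -/
noncomputable def numIndex (𝕂 : Type*) [RCLike 𝕂] (X : Type*) [NormedAddCommGroup X]
    [NormedSpace 𝕂 X] : ℝ :=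
  sInf {r | ∃ T : X →L[𝕂] X, ‖T‖ = 1 ∧ r = numRadius 𝕂 (⇑T)}

/-- `x` is an extreme point of the convex set `s` : `y + z = 2x` with `y, z ∈ s` forces
`y = z = x`. -/
def IsExtremePt {E : Type*} [AddCommGroup E] (s : Set E) (x : E) : Prop :=
  x ∈ s ∧ ∀ y ∈ s, ∀ z ∈ s, y + z = x + x → y = x ∧ z = x

/-- `x` is a strongly exposed point of the closed unit ball. -/
def StronglyExposedPt (𝕂 : Type*) [RCLike 𝕂] {X : Type*} [NormedAddCommGroup X]
    [NormedSpace 𝕂 X] (x : X) : Prop :=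
  x ∈ Metric.closedBall (0 : X) 1 ∧ ∃ x' : X →L[𝕂] 𝕂, x' ≠ 0 ∧ ‖x'‖ ≤ 1 ∧
    (∀ y ∈ Metric.closedBall (0 : X) 1, RCLike.re (x' y) ≤ RCLike.re (x' x)) ∧
    ∀ xs : ℕ → X, (∀ n, xs n ∈ Metric.closedBall (0 : X) 1) →
      Tendsto (fun n => RCLike.re (x' (xs n))) atTop (nhds (RCLike.re (x' x))) →
      Tendsto xs atTop (nhds x)

/-- `x'` is a weak-* exposed point of the dual unit ball. -/
def WeakStarExposed (𝕂 : Type*) [RCLike 𝕂] {X : Type*} [NormedAddCommGroup X]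
    [NormedSpace 𝕂 X] (x' : X →L[𝕂] 𝕂) : Prop :=
  ‖x'‖ ≤ 1 ∧ ∃ x ∈ Metric.closedBall (0 : X) 1, x' x = 1 ∧
    ∀ y' : X →L[𝕂] 𝕂, ‖y'‖ ≤ 1 → y' x = 1 → y' = x'

/-- `f` is a strong peak function at `x₀`: `f` is nonzero on the ball and every maximizing
sequence in the closed unit ball converges to `x₀`. -/
def StrongPeakAt {X Y : Type*} [NormedAddCommGroup X] [NormedAddCommGroup Y]
    (f : X → Y) (x₀ : X) : Prop :=
  (∃ x ∈ Metric.closedBall (0 : X) 1, f x ≠ 0) ∧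
    ∀ xs : ℕ → X, (∀ n, xs n ∈ Metric.closedBall (0 : X) 1) →
      Tendsto (fun n => ‖f (xs n)‖) atTop (nhds (supNorm f)) →
      Tendsto xs atTop (nhds x₀)

/-- Complex extreme point of the closed unit ball. -/
def ComplexExtremePoint {X : Type*} [NormedAddCommGroup X] [NormedSpace ℂ X] (x : X) : Prop :=
  x ∈ Metric.closedBall (0 : X) 1 ∧
    ∀ y : X, (∀ θ : ℝ, ‖x + Complex.exp (θ * Complex.I) • y‖ ≤ 1) → y = 0

/-- Membership in `A_b(B_X : Y)`: bounded, continuous on the closed unit ball and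
holomorphic on the open unit ball. -/
def MemAb {X Y : Type*} [NormedAddCommGroup X] [NormedSpace ℂ X] [NormedAddCommGroup Y]
    [NormedSpace ℂ Y] (f : X → Y) : Prop :=
  ContinuousOn f (Metric.closedBall (0 : X) 1) ∧
    (∃ C, ∀ x ∈ Metric.closedBall (0 : X) 1, ‖f x‖ ≤ C) ∧
    DifferentiableOn ℂ f (Metric.ball (0 : X) 1)

/-- Membership in `A_u(B_X : Y)`: additionally uniformly continuous on the closed ball. -/
def MemAu {X Y : Type*} [NormedAddCommGroup X] [NormedSpace ℂ X] [NormedAddCommGroup Y]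
    [NormedSpace ℂ Y] (f : X → Y) : Prop :=
  MemAb f ∧ UniformContinuousOn f (Metric.closedBall (0 : X) 1)

/-- The set `ρA_u(B_X)` of strong peak points of `A_u(B_X)`. -/
def strongPeakPtsAu (X : Type*) [NormedAddCommGroup X] [NormedSpace ℂ X] : Set X :=
  {x₀ | ∃ f : X → ℂ, MemAu f ∧ StrongPeakAt f x₀}

/-- The holomorphic numerical index `n_u(X)`. -/
noncomputable def holNumIndex (X : Type*) [NormedAddCommGroup X] [NormedSpace ℂ X] : ℝ :=
  sInf {r | ∃ f : X → X, MemAu f ∧ supNorm f = 1 ∧ r = numRadius ℂ f}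

/-! Let `p` strongly attain its norm at `x₀` and let `u` be a unit vector. The polynomial
`P x = (p x / ‖p‖) • u` has norm one, so `v(P) = 1`, and along pairs `(xₙ, xₙ*) ∈ Π(X)` realising
`v(P)` both `|p xₙ| → ‖p‖` and `|xₙ* u| → 1`. Strong attainment makes a subsequence of `xₙ`
converge to `α x₀`, so a weak-* cluster point `f` of the `xₙ*` has `|f x₀| = 1 = |f u|`. Hence
`A = {f ∈ B_{X*} : |f x₀| = 1}` is a weak-* compact norming set; by Hahn–Banach `B_{X*}` is the
weak-* closed convex hull of `A`, and by Milman's theorem all extreme points of `B_{X*}` lie in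
`A`. -/

open scoped Pointwise

lemma MapClusterPt.eq_of_tendsto {α Y : Type*} [TopologicalSpace Y] [T2Space Y] {l : Filter α}
    {u : α → Y} {x y : Y} (hx : MapClusterPt x l u) (hu : Tendsto u l (𝓝 y)) : x = y :=
  eq_of_nhds_neBot (ClusterPt.mono hx hu)

lemma tendsto_one_of_mul_tendsto_one {α : Type*} {l : Filter α} {a b : α → ℝ}
    (ha₀ : ∀ i, 0 ≤ a i) (ha₁ : ∀ i, a i ≤ 1) (hb₁ : ∀ i, b i ≤ 1)
    (h : Tendsto (fun i => a i * b i) l (𝓝 1)) : Tendsto a l (𝓝 1) :=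
  tendsto_of_tendsto_of_tendsto_of_le_of_le h tendsto_const_nhds
    (fun i => mul_le_of_le_one_right (ha₀ i) (hb₁ i)) ha₁

section ConvexExtreme

variable {𝕜 E : Type*} [Field 𝕜] [LinearOrder 𝕜] [IsStrictOrderedRing 𝕜] [AddCommGroup E]
  [Module 𝕜 E]

lemma Convex.mem_of_mem_extremePoints_of_mem_convexHull {s t : Set E} {x : E}
    (hs : Convex 𝕜 s) (hts : t ⊆ s) (hx : x ∈ s.extremePoints 𝕜) (hxt : x ∈ convexHull 𝕜 t) :
    x ∈ t := by
  by_contra hxt'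
  exact (hs.mem_extremePoints_iff_mem_sdiff_convexHull_sdiff.1 hx).2
    (convexHull_mono (subset_sdiff.2 ⟨hts, disjoint_singleton_right.2 hxt'⟩) hxt)

lemma Convex.mem_extremePoints_of_add_eq {s : Set E} {x : E} (hs : Convex 𝕜 s) (hx : x ∈ s)
    (h : ∀ y ∈ s, ∀ z ∈ s, y + z = x + x → y = x) : x ∈ s.extremePoints 𝕜 := by
  refine mem_extremePoints_iff_left.2 ⟨hx, fun y hy z hz ⟨p, q, hp, hq, hpq, hpqx⟩ => ?_⟩
  set m := min p q
  have hm : 0 < m := lt_min hp hq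
  -- `x ± m • (y - z)` are still convex combinations of `y` and `z`, and they average to `x`
  have hy' : x + m • (y - z) ∈ s := by
    convert @hs y hy z hz (p + m) (q - m) (by positivity) (by linarith [min_le_right p q])
      (by linarith) using 1
    rw [← hpqx]; module
  have hz' : x - m • (y - z) ∈ s := by
    convert @hs y hy z hz (p - m) (q + m) (by linarith [min_le_left p q]) (by positivity)
      (by linarith) using 1
    rw [← hpqx]; module
  have hyz : m • (y - z) = 0 := by simpa using h _ hy' _ hz' (by abel)
  rw [smul_eq_zero_iff_right hm.ne', sub_eq_zero] at hyz
  subst hyz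
  rw [← hpqx, ← add_smul, hpq, one_smul]

end ConvexExtreme

section Milman

variable {E : Type*} [AddCommGroup E] [Module ℝ E] [TopologicalSpace E]
  [IsTopologicalAddGroup E] [ContinuousSMul ℝ E]

lemma isCompact_convexJoin {s t : Set E} (hs : IsCompact s) (ht : IsCompact t) :
    IsCompact (convexJoin ℝ s t) := by
  have : convexJoin ℝ s t =
      (fun p : ℝ × E × E => AffineMap.lineMap p.2.1 p.2.2 p.1) '' (Icc 0 1 ×ˢ s ×ˢ t) := by
    ext x
    simp only [mem_convexJoin, segment_eq_image_lineMap, mem_image, mem_prod, Prod.exists]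
    constructor
    · rintro ⟨a, ha, b, hb, θ, hθ, rfl⟩
      exact ⟨θ, a, b, ⟨hθ, ha, hb⟩, rfl⟩
    · rintro ⟨θ, a, b, ⟨hθ, ha, hb⟩, rfl⟩
      exact ⟨a, ha, b, hb, θ, hθ, rfl⟩
  rw [this]
  exact (isCompact_Icc.prod (hs.prod ht)).image (by fun_prop)

lemma isCompact_convexHull_union {s t : Set E} (hs : IsCompact s) (ht : IsCompact t)
    (hsc : Convex ℝ s) (htc : Convex ℝ t) : IsCompact (convexHull ℝ (s ∪ t)) := by
  rcases s.eq_empty_or_nonempty with rfl | hs₀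
  · rwa [empty_union, htc.convexHull_eq]
  rcases t.eq_empty_or_nonempty with rfl | ht₀
  · rwa [union_empty, hsc.convexHull_eq]
  rw [hsc.convexHull_union htc hs₀ ht₀]
  exact isCompact_convexJoin hs ht

lemma isCompact_convexHull_biUnion {ι : Type*} (F : Finset ι) {C : ι → Set E}
    (hcomp : ∀ i ∈ F, IsCompact (C i)) (hconv : ∀ i ∈ F, Convex ℝ (C i)) :
    IsCompact (convexHull ℝ (⋃ i ∈ F, C i)) := by
  classical
  induction F using Finset.induction_on with
  | empty => simp
  | insert a F _ ih =>
    rw [Finset.set_biUnion_insert, ← convexHull_convexHull_union_right]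
    exact isCompact_convexHull_union (hcomp a (F.mem_insert_self a))
      (ih (fun i hi => hcomp i (Finset.mem_insert_of_mem hi))
        fun i hi => hconv i (Finset.mem_insert_of_mem hi))
      (hconv a (F.mem_insert_self a)) (convex_convexHull ℝ _)

/-- **Milman's theorem**. -/
theorem mem_of_mem_extremePoints_closure_convexHull [T2Space E] [LocallyConvexSpace ℝ E]
    {K : Set E} (hK : IsCompact K) (hKhull : IsCompact (closure (convexHull ℝ K))) {x : E}
    (hx : x ∈ (closure (convexHull ℝ K)).extremePoints ℝ) : x ∈ K := by
  by_contra hxK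
  obtain ⟨V, hV0, hVclosed, hVconv, hVx⟩ :
      ∃ V ∈ 𝓝 (0 : E), IsClosed V ∧ Convex ℝ V ∧ ∀ v ∈ V, x - v ∉ K := by
    have hU : (x - ·) ⁻¹' Kᶜ ∈ 𝓝 (0 : E) :=
      (continuous_const.sub continuous_id).tendsto' 0 x (sub_zero x)
        (hK.isClosed.isOpen_compl.mem_nhds hxK)
    obtain ⟨C, hC0, hCclosed, hCU⟩ := exists_mem_nhds_isClosed_subset hU
    obtain ⟨W, ⟨hW0, hWconv⟩, hWC⟩ := (LocallyConvexSpace.convex_basis_zero ℝ E).mem_iff.1 hC0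
    exact ⟨closure W, mem_of_superset hW0 subset_closure, isClosed_closure, hWconv.closure,
      fun v hv => hCU (closure_minimal hWC hCclosed hv)⟩
  -- `s` lies in the convex hull of finitely many compact convex pieces `s ∩ (a + V)`, `a ∈ K`, so
  -- the extreme point `x` lies in one of them, contradicting the choice of `V`
  obtain ⟨F, hFK, hKF⟩ := hK.elim_nhds_subcover (fun a => (· - a) ⁻¹' V)
    fun a _ => (continuous_sub_right a).tendsto' a 0 (sub_self a) hV0
  set s := closure (convexHull ℝ K)
  have hpiece : ∀ a ∈ F, IsCompact (s ∩ (· - a) ⁻¹' V) ∧ Convex ℝ (s ∩ (· - a) ⁻¹' V) :=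
    fun a _ => ⟨hKhull.inter_right (hVclosed.preimage (continuous_sub_right a)),
      (convex_convexHull ℝ K).closure.inter (hVconv.affine_preimage
        (AffineMap.id ℝ E - AffineMap.const ℝ E a))⟩
  have hs : s ⊆ convexHull ℝ (⋃ a ∈ F, s ∩ (· - a) ⁻¹' V) := by
    refine closure_minimal (convexHull_min (fun y hy => subset_convexHull ℝ _ ?_)
      (convex_convexHull ℝ _)) (isCompact_convexHull_biUnion F (fun a ha => (hpiece a ha).1)
        fun a ha => (hpiece a ha).2).isClosed
    obtain ⟨a, ha, hya⟩ := mem_iUnion₂.1 (hKF hy)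
    exact mem_iUnion₂.2 ⟨a, ha, subset_closure (subset_convexHull ℝ K hy), hya⟩
  obtain ⟨a, ha, -, hxa⟩ := mem_iUnion₂.1 <|
    (convex_convexHull ℝ K).closure.mem_of_mem_extremePoints_of_mem_convexHull
      (iUnion₂_subset fun a _ => inter_subset_left) hx (hs hx.1)
  exact hVx _ hxa (by simpa using hFK a ha)

end Milman

section WeakDual

variable {𝕂 X : Type*} [RCLike 𝕂] [NormedAddCommGroup X] [NormedSpace 𝕂 X]

instance WeakDual.instLocallyConvexSpaceReal : LocallyConvexSpace ℝ (WeakDual 𝕂 X) :=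
  WeakBilin.locallyConvexSpace

lemma convex_preimage_toStrongDual_closedBall :
    Convex ℝ (WeakDual.toStrongDual ⁻¹' closedBall (0 : StrongDual 𝕂 X) 1) :=
  (convex_closedBall _ _).linear_preimage
    ((WeakDual.toStrongDual : WeakDual 𝕂 X ≃ₗ[𝕂] StrongDual 𝕂 X).toLinearMap.restrictScalars ℝ)

lemma closure_convexHull_eq_preimage_toStrongDual_closedBall {A : Set (WeakDual 𝕂 X)}
    (hAB : A ⊆ WeakDual.toStrongDual ⁻¹' closedBall (0 : StrongDual 𝕂 X) 1)
    (hA : ∀ w : X, ∃ f ∈ A, ‖w‖ ≤ RCLike.re (f w)) :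
    closure (convexHull ℝ A) = WeakDual.toStrongDual ⁻¹' closedBall (0 : StrongDual 𝕂 X) 1 := by
  refine subset_antisymm (closure_minimal (convexHull_min hAB
    convex_preimage_toStrongDual_closedBall) (WeakDual.isClosed_closedBall 0 1)) fun e he => ?_
  by_contra h
  obtain ⟨ℓ, u, hAu, hue⟩ := RCLike.geometric_hahn_banach_closed_point (𝕜 := 𝕂)
    (convex_convexHull ℝ A).closure isClosed_closure h
  -- every weak-* continuous functional is an evaluation
  obtain ⟨w, rfl⟩ := LinearMap.dualEmbedding_surjective (topDualPairing 𝕂 X) ℓ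
  obtain ⟨f, hfA, hfw⟩ := hA w
  have hf := hAu f (subset_closure (subset_convexHull ℝ A hfA))
  have he' : RCLike.re (e w) ≤ ‖w‖ :=
    (RCLike.re_le_norm _).trans ((e.le_opNorm w).trans
      (mul_le_of_le_one_left (norm_nonneg w) (mem_closedBall_zero_iff.1 he)))
  change u < RCLike.re (e w) at hue
  change RCLike.re (f w) < u at hf
  linarith

lemma IsExtremePt.toWeakDual_mem_extremePoints {e : StrongDual 𝕂 X}
    (he : IsExtremePt (closedBall (0 : StrongDual 𝕂 X) 1) e) :
    StrongDual.toWeakDual e ∈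
      (WeakDual.toStrongDual ⁻¹' closedBall (0 : StrongDual 𝕂 X) 1).extremePoints ℝ := by
  refine Convex.mem_extremePoints_of_add_eq (𝕜 := ℝ) (E := WeakDual 𝕂 X)
    convex_preimage_toStrongDual_closedBall he.1 fun y hy z hz hyz => ?_
  have h2 : WeakDual.toStrongDual y + WeakDual.toStrongDual z = e + e := by
    rw [← map_add, hyz]; rfl
  exact (he.2 _ hy _ hz h2).1

lemma exists_norm_le_one_forall_mapClusterPt {ι : Type*} {l : Filter ι} [l.NeBot]
    (g : ι → StrongDual 𝕂 X) (hg : ∀ i, ‖g i‖ ≤ 1) :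
    ∃ f : StrongDual 𝕂 X, ‖f‖ ≤ 1 ∧ ∀ y, MapClusterPt (f y) l (fun i => g i y) := by
  obtain ⟨f, hf, hfg⟩ := (WeakDual.isCompact_closedBall (0 : StrongDual 𝕂 X) 1).exists_mapClusterPt
    (f := l) (u := fun i => StrongDual.toWeakDual (g i))
    (tendsto_principal.2 (Eventually.of_forall fun i => mem_closedBall_zero_iff.2 (hg i)))
  exact ⟨WeakDual.toStrongDual f, mem_closedBall_zero_iff.1 hf,
    fun y => hfg.continuousAt_comp (WeakDual.eval_continuous y).continuousAt⟩

end WeakDual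

section HomogeneousPolynomial

variable {𝕂 X Y : Type*} [RCLike 𝕂] [NormedAddCommGroup X] [NormedSpace 𝕂 X]
  [NormedAddCommGroup Y] [NormedSpace 𝕂 Y] {k : ℕ}

lemma polyEval_smul (L : ContinuousMultilinearMap 𝕂 (fun _ : Fin k => X) Y) (c : 𝕂) (x : X) :
    polyEval L (c • x) = c ^ k • polyEval L x := by
  simp [polyEval, L.map_smul_univ (fun _ => c) (fun _ => x)]

lemma norm_polyEval_le (L : ContinuousMultilinearMap 𝕂 (fun _ : Fin k => X) Y) {x : X}
    (hx : x ∈ closedBall (0 : X) 1) : ‖polyEval L x‖ ≤ ‖L‖ :=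
  (L.le_opNorm _).trans <| by
    simpa using mul_le_of_le_one_right (norm_nonneg L)
      (pow_le_one₀ (norm_nonneg x) (mem_closedBall_zero_iff.1 hx))

lemma le_supNorm_polyEval (L : ContinuousMultilinearMap 𝕂 (fun _ : Fin k => X) Y) {x : X}
    (hx : x ∈ closedBall (0 : X) 1) : ‖polyEval L x‖ ≤ supNorm (polyEval L) :=
  le_csSup ⟨‖L‖, forall_mem_image.2 fun _ hy => norm_polyEval_le L hy⟩ ⟨x, hx, rfl⟩

lemma supNorm_polyEval_pos {L : ContinuousMultilinearMap 𝕂 (fun _ : Fin k => X) Y}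
    (hL : polyEval L ≠ 0) : 0 < supNorm (polyEval L) := by
  obtain ⟨z, hz⟩ := Function.ne_iff.1 hL
  set c : 𝕂 := (((‖z‖ + 1)⁻¹ : ℝ) : 𝕂)
  have hc : c ≠ 0 := RCLike.ofReal_ne_zero.2 (by positivity)
  have hcz : c • z ∈ closedBall (0 : X) 1 := by
    rw [mem_closedBall_zero_iff, norm_smul, RCLike.norm_ofReal, abs_of_pos (by positivity),
      inv_mul_le_one₀ (by positivity)]
    linarith
  calc 0 < ‖polyEval L (c • z)‖ := by
        rw [polyEval_smul, norm_pos_iff]; exact smul_ne_zero (pow_ne_zero k hc) hz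
    _ ≤ supNorm (polyEval L) := le_supNorm_polyEval L hcz

lemma supNorm_polyEval_smulRight (L : ContinuousMultilinearMap 𝕂 (fun _ : Fin k => X) 𝕂)
    (u : Y) : supNorm (polyEval (L.smulRight u)) = supNorm (polyEval L) * ‖u‖ := by
  have : (fun x => ‖polyEval (L.smulRight u) x‖) '' closedBall (0 : X) 1 =
      ‖u‖ • (fun x => ‖polyEval L x‖) '' closedBall (0 : X) 1 := by
    rw [← image_smul, image_image]
    simp [polyEval, norm_smul, mul_comm]
  rw [supNorm, supNorm, this, Real.sSup_smul_of_nonneg (norm_nonneg u), smul_eq_mul, mul_comm]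

lemma numRadius_polyEval_le_supNorm (L : ContinuousMultilinearMap 𝕂 (fun _ : Fin k => X) X) :
    numRadius 𝕂 (polyEval L) ≤ supNorm (polyEval L) := by
  refine Real.sSup_le ?_ (Real.sSup_nonneg ?_)
  · rintro _ ⟨x, x', hx, hx', -, rfl⟩
    calc ‖x' (polyEval L x)‖ ≤ ‖x'‖ * ‖polyEval L x‖ := x'.le_opNorm _
      _ = ‖polyEval L x‖ := by rw [hx', one_mul]
      _ ≤ supNorm (polyEval L) := le_supNorm_polyEval L (mem_closedBall_zero_iff.2 hx.le)
  · rintro _ ⟨x, -, rfl⟩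
    exact norm_nonneg _

lemma numRadius_nonneg (f : X → X) : 0 ≤ numRadius 𝕂 f :=
  Real.sSup_nonneg <| by rintro _ ⟨_, _, _, _, _, rfl⟩; exact norm_nonneg _

lemma numRadius_polyEval_eq_one (hidx : polyNumIndex 𝕂 X k = 1)
    {L : ContinuousMultilinearMap 𝕂 (fun _ : Fin k => X) X} (hL : supNorm (polyEval L) = 1) :
    numRadius 𝕂 (polyEval L) = 1 :=
  (hL ▸ numRadius_polyEval_le_supNorm L).antisymm <| hidx ▸ csInf_le
    ⟨0, by rintro _ ⟨_, _, rfl⟩; exact numRadius_nonneg _⟩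
    ⟨L, hL, rfl⟩

end HomogeneousPolynomial

section NormingFunctionals

variable {𝕂 X : Type*} [RCLike 𝕂] [NormedAddCommGroup X] [NormedSpace 𝕂 X]

lemma tendsto_apply_sub_apply {α : Type*} {l : Filter α} {g : α → StrongDual 𝕂 X} {xs : α → X}
    {y : X} (hg : ∀ i, ‖g i‖ ≤ 1) (hxs : Tendsto xs l (𝓝 y)) :
    Tendsto (fun i => g i y - g i (xs i)) l (𝓝 0) := by
  refine squeeze_zero_norm (fun i => ?_) (tendsto_iff_norm_sub_tendsto_zero.1 hxs)
  rw [← map_sub, norm_sub_rev (xs i)]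
  exact ((g i).le_opNorm _).trans (mul_le_of_le_one_left (norm_nonneg _) (hg i))

lemma exists_seq_tendsto_numRadius {f : X → X} (hf : 0 < numRadius 𝕂 f) :
    ∃ (xs : ℕ → X) (x's : ℕ → StrongDual 𝕂 X),
      (∀ n, ‖xs n‖ = 1 ∧ ‖x's n‖ = 1 ∧ x's n (xs n) = 1) ∧
      Tendsto (fun n => ‖x's n (f (xs n))‖) atTop (𝓝 (numRadius 𝕂 f)) := by
  set R := {r | ∃ (x : X) (x' : X →L[𝕂] 𝕂), ‖x‖ = 1 ∧ ‖x'‖ = 1 ∧ x' x = 1 ∧ r = ‖x' (f x)‖}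
  have hR : numRadius 𝕂 f = sSup R := rfl
  have hne : R.Nonempty := nonempty_iff_ne_empty.2 fun h => by simp [hR, h] at hf
  have hbdd : BddAbove R := by
    by_contra h
    simp [hR, Real.sSup_of_not_bddAbove h] at hf
  obtain ⟨r, -, hr, hrR⟩ := exists_seq_tendsto_sSup hne hbdd
  choose xs x's hxs hx's hx hrx using hrR
  exact ⟨xs, x's, fun n => ⟨hxs n, hx's n, hx n⟩, by simpa only [← hrx, hR] using hr⟩

lemma exists_norm_apply_eq_one_of_mem_polyAttainPts {k : ℕ} (hidx : polyNumIndex 𝕂 X k = 1)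
    {x₀ u : X} (hx₀ : x₀ ∈ polyAttainPts 𝕂 X k) (hu : ‖u‖ = 1) :
    ∃ f : StrongDual 𝕂 X, ‖f‖ ≤ 1 ∧ ‖f x₀‖ = 1 ∧ ‖f u‖ = 1 := by
  obtain ⟨-, L, hL, hstrong⟩ := hx₀
  set S := supNorm (polyEval L)
  have hS : 0 < S := supNorm_polyEval_pos hL
  set P := L.smulRight ((S : 𝕂)⁻¹ • u)
  have hP : supNorm (polyEval P) = 1 := by
    rw [supNorm_polyEval_smulRight, norm_smul, norm_inv, RCLike.norm_ofReal, abs_of_pos hS, hu,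
      mul_one, mul_inv_cancel₀ hS.ne']
  have hvP := numRadius_polyEval_eq_one hidx hP
  obtain ⟨xs, x's, hxs', hlim⟩ := exists_seq_tendsto_numRadius (f := polyEval P) (hvP ▸ one_pos)
  have hprod : Tendsto (fun n => ‖polyEval L (xs n)‖ / S * ‖x's n u‖) atTop (𝓝 1) := by
    refine hvP ▸ hlim.congr fun n => ?_
    simp only [P, polyEval, ContinuousMultilinearMap.smulRight_apply, map_smul, smul_eq_mul,
      norm_mul, norm_inv, RCLike.norm_ofReal, abs_of_pos hS]
    ring
  have ha₁ : ∀ n, ‖polyEval L (xs n)‖ / S ≤ 1 := fun n =>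
    div_le_one_of_le₀ (le_supNorm_polyEval L (mem_closedBall_zero_iff.2 (hxs' n).1.le)) hS.le
  have hb₁ : ∀ n, ‖x's n u‖ ≤ 1 := fun n =>
    ((x's n).le_opNorm u).trans (by rw [(hxs' n).2.1, hu, one_mul])
  have ha := tendsto_one_of_mul_tendsto_one (fun n => by positivity) ha₁ hb₁ hprod
  have hb := tendsto_one_of_mul_tendsto_one (fun n => norm_nonneg _) hb₁ ha₁
    (by simpa only [mul_comm] using hprod)
  obtain ⟨α, φ, hφ, hα, hxsα⟩ := hstrong xs (fun n => mem_closedBall_zero_iff.2 (hxs' n).1.le)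
    (by simpa [div_mul_cancel₀ _ hS.ne'] using ha.mul_const S)
  obtain ⟨f, hf, hclust⟩ :=
    exists_norm_le_one_forall_mapClusterPt (l := atTop) (x's ∘ φ) fun n => (hxs' (φ n)).2.1.le
  have hfα : f (α • x₀) = 1 := (hclust _).eq_of_tendsto <| by
    simpa [(hxs' _).2.2] using
      (tendsto_apply_sub_apply (fun n => (hxs' (φ n)).2.1.le) hxsα).add_const 1
  refine ⟨f, hf, ?_, ((hclust u).continuousAt_comp continuous_norm.continuousAt).eq_of_tendsto
    (hb.comp hφ.tendsto_atTop)⟩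
  simpa [hα] using congrArg norm hfα

end NormingFunctionals

section Main

variable {𝕂 X : Type*} [RCLike 𝕂] [NormedAddCommGroup X] [NormedSpace 𝕂 X] {k : ℕ}

lemma exists_ne_zero_of_mem_polyAttainPts (hk : 1 ≤ k) {x₀ : X}
    (hx₀ : x₀ ∈ polyAttainPts 𝕂 X k) : ∃ z : X, z ≠ 0 := by
  obtain ⟨-, L, hL, -⟩ := hx₀
  obtain ⟨z, hz⟩ := Function.ne_iff.1 hL
  exact ⟨z, fun h => hz (L.map_coord_zero ⟨0, hk⟩ h)⟩

lemma exists_re_apply_eq_norm_of_mem_polyAttainPts (hk : 1 ≤ k)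
    (hidx : polyNumIndex 𝕂 X k = 1) {x₀ : X} (hx₀ : x₀ ∈ polyAttainPts 𝕂 X k) (w : X) :
    ∃ f : StrongDual 𝕂 X, ‖f‖ ≤ 1 ∧ ‖f x₀‖ = 1 ∧ RCLike.re (f w) = ‖w‖ := by
  obtain ⟨u, hu, hwu⟩ : ∃ u : X, ‖u‖ = 1 ∧ w = (‖w‖ : 𝕂) • u := by
    rcases eq_or_ne w 0 with rfl | hw
    · obtain ⟨z, hz⟩ := exists_ne_zero_of_mem_polyAttainPts hk hx₀
      exact ⟨_, norm_smul_inv_norm (𝕜 := 𝕂) hz, by simp⟩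
    · exact ⟨_, norm_smul_inv_norm (𝕜 := 𝕂) hw, (smul_inv_smul₀ (by simpa using hw) w).symm⟩
  obtain ⟨f, hf, hfx₀, hfu⟩ := exists_norm_apply_eq_one_of_mem_polyAttainPts hidx hx₀ hu
  -- rotating `f` makes its value at `u` real
  refine ⟨starRingEnd 𝕂 (f u) • f, ?_, ?_, ?_⟩
  · rwa [norm_smul, RCLike.norm_conj, hfu, one_mul]
  · simp only [FunLike.coe_smul, Pi.smul_apply, smul_eq_mul, norm_mul,
      RCLike.norm_conj, hfu, hfx₀, one_mul]
  · have hfw : (starRingEnd 𝕂 (f u) • f) w = ‖w‖ := by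
      conv_lhs => rw [hwu]
      simp [RCLike.conj_mul, hfu]
    rw [hfw, RCLike.ofReal_re]

end Main

theorem statement5_general {𝕂 X : Type*} [RCLike 𝕂] [NormedAddCommGroup X] [NormedSpace 𝕂 X]
    {k : ℕ} (hk : 1 ≤ k) (hidx : polyNumIndex 𝕂 X k = 1) :
    ∀ x ∈ polyAttainPts 𝕂 X k, ∀ x' : X →L[𝕂] 𝕂,
      IsExtremePt (Metric.closedBall (0 : X →L[𝕂] 𝕂) 1) x' → ‖x' x‖ = 1 := by
  intro x hx x' hx'
  set B := WeakDual.toStrongDual ⁻¹' closedBall (0 : StrongDual 𝕂 X) 1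
  set A : Set (WeakDual 𝕂 X) := B ∩ {f | ‖f x‖ = 1}
  have hAB : A ⊆ B := inter_subset_left
  have hA : IsCompact A := (WeakDual.isCompact_closedBall 0 1).of_isClosed_subset
    ((WeakDual.isClosed_closedBall 0 1).inter
      (isClosed_eq (WeakDual.eval_continuous x).norm continuous_const)) hAB
  have hAnorming : ∀ w : X, ∃ f ∈ A, ‖w‖ ≤ RCLike.re (f w) := fun w => by
    obtain ⟨f, hf, hfx, hfw⟩ := exists_re_apply_eq_norm_of_mem_polyAttainPts hk hidx hx w
    exact ⟨StrongDual.toWeakDual f, ⟨mem_closedBall_zero_iff.2 hf, hfx⟩, hfw.ge⟩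
  have hhull : closure (convexHull ℝ A) = B :=
    closure_convexHull_eq_preimage_toStrongDual_closedBall hAB hAnorming
  exact (mem_of_mem_extremePoints_closure_convexHull hA
    (hhull ▸ WeakDual.isCompact_closedBall 0 1) (hhull ▸ hx'.toWeakDual_mem_extremePoints)).2

/-- if `n^(k)(X) = 1` then `|x*(x)| = 1` for every `x ∈ ρ̃𝒫(ᵏX)` and every
extreme point `x*` of the dual unit ball. -/
theorem statement5 {𝕂 X : Type*} [RCLike 𝕂] [NormedAddCommGroup X] [NormedSpace 𝕂 X]
    [CompleteSpace X] {k : ℕ} (hk : 1 ≤ k) (hidx : polyNumIndex 𝕂 X k = 1) :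
    ∀ x ∈ polyAttainPts 𝕂 X k, ∀ x' : X →L[𝕂] 𝕂,
      IsExtremePt (Metric.closedBall (0 : X →L[𝕂] 𝕂) 1) x' → ‖x' x‖ = 1 :=
  statement5_general hk hidx
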